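/- Let α > 1 and x_min > 0, and let X_1, X_2, … be i.i.d. random variables distributed according to the power-law distribution with exponent α and threshold x_min. Then the maximum likelihood estimator α̂_n = 1 + n·(Σ_{i=1}^n ln(X_i/x_min))^(−1) converges to α almost surely as n → ∞. -/

import Mathlib

/-!
Under the power law, `log (X / xmin)` has mean `1 / (α - 1)` (it is exponentially distributed
with rate `α - 1`). By the strong law of large numbers the averages `(1/n) Σ log (X_i / xmin)`
converge almost surely to this nonzero mean, and `α̂_n = 1 + (average)⁻¹` converges to
`1 + (α - 1) = α` by continuity of inversion away from `0`.
-/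

open MeasureTheory ProbabilityTheory Real Filter Finset

/-- The power-law probability measure with exponent `α` and threshold `xmin`:
the measure on `[xmin, ∞)` with density `((α−1)/xmin) · (x/xmin)^(−α)`. -/
noncomputable def powerLawMeasure (α xmin : ℝ) : Measure ℝ :=
  volume.withDensity fun x =>
    ENNReal.ofReal (if xmin ≤ x then ((α - 1) / xmin) * (x / xmin) ^ (-α) else 0)

/-- The maximum likelihood estimator `α̂_n = 1 + n · (Σ_{i=1}^n ln(X_i/xmin))⁻¹`. -/
noncomputable def mleExponent {Ω : Type*} (X : ℕ → Ω → ℝ) (xmin : ℝ) (n : ℕ) (ω : Ω) : ℝ :=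
  1 + n / (∑ i ∈ Finset.range n, Real.log (X i ω / xmin))

open Set Topology

section WithDensityOfReal

variable {S : Type*} [MeasurableSpace S] {μ : Measure S} {f : S → ℝ}

lemma integrable_withDensity_ofReal_iff (hf : Measurable f) (hf0 : 0 ≤ᵐ[μ] f) {g : S → ℝ} :
    Integrable g (μ.withDensity fun x => ENNReal.ofReal (f x)) ↔
      Integrable (fun x => g x * f x) μ := by
  rw [integrable_withDensity_iff hf.ennreal_ofReal (.of_forall fun _ => ENNReal.ofReal_lt_top)]
  refine integrable_congr ?_
  filter_upwards [hf0] with x hx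
  rw [ENNReal.toReal_ofReal hx]

lemma integral_withDensity_ofReal (hf : Measurable f) (hf0 : 0 ≤ᵐ[μ] f) (g : S → ℝ) :
    ∫ x, g x ∂μ.withDensity (fun x => ENNReal.ofReal (f x)) = ∫ x, g x * f x ∂μ := by
  rw [integral_withDensity_eq_integral_toReal_smul hf.ennreal_ofReal
    (.of_forall fun _ => ENNReal.ofReal_lt_top)]
  refine integral_congr_ae ?_
  filter_upwards [hf0] with x hx
  rw [ENNReal.toReal_ofReal hx, smul_eq_mul, mul_comm]

end WithDensityOfReal

noncomputable def powerLawDensity (α xmin x : ℝ) : ℝ :=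
  if xmin ≤ x then ((α - 1) / xmin) * (x / xmin) ^ (-α) else 0

section PowerLaw

variable {α xmin : ℝ}

lemma powerLawMeasure_eq_withDensity :
    powerLawMeasure α xmin =
      volume.withDensity fun x => ENNReal.ofReal (powerLawDensity α xmin x) :=
  rfl

lemma measurable_powerLawDensity : Measurable (powerLawDensity α xmin) :=
  Measurable.ite measurableSet_Ici (by fun_prop) measurable_const

lemma powerLawDensity_nonneg (hα : 1 < α) (hxmin : 0 < xmin) (x : ℝ) :
    0 ≤ powerLawDensity α xmin x := by
  unfold powerLawDensity
  split_ifs with hx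
  · have : 0 < x / xmin := div_pos (hxmin.trans_le hx) hxmin
    have : 0 < α - 1 := sub_pos.mpr hα
    positivity
  · exact le_rfl

noncomputable def logMomentPrimitive (α xmin x : ℝ) : ℝ :=
  -((x / xmin) ^ (1 - α) * (log (x / xmin) + (α - 1)⁻¹))

lemma hasDerivAt_logMomentPrimitive (hα : α ≠ 1) (hxmin : 0 < xmin) {x : ℝ}
    (hx : xmin ≤ x) :
    HasDerivAt (logMomentPrimitive α xmin) (log (x / xmin) * powerLawDensity α xmin x) x := by
  have hu : 0 < x / xmin := div_pos (hxmin.trans_le hx) hxmin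
  have hquot : HasDerivAt (fun x : ℝ => x / xmin) (1 / xmin) x := by
    simpa using (hasDerivAt_id x).div_const xmin
  have hpow := (Real.hasDerivAt_rpow_const (p := 1 - α) (Or.inl hu.ne')).comp x hquot
  have hlog := (hquot.log hu.ne').add_const (α - 1)⁻¹
  refine ((hpow.mul hlog).neg).congr_deriv ?_
  rw [Function.comp_apply, powerLawDensity, if_pos hx, show 1 - α - 1 = -α by ring,
    show 1 - α = -α + 1 by ring, Real.rpow_add hu, Real.rpow_one]
  have : α - 1 ≠ 0 := sub_ne_zero.mpr hα
  have : x ≠ 0 := (hxmin.trans_le hx).ne'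
  field_simp
  ring

lemma tendsto_logMomentPrimitive_atTop (hα : 1 < α) (hxmin : 0 < xmin) :
    Tendsto (logMomentPrimitive α xmin) atTop (𝓝 0) := by
  have hpos : 0 < α - 1 := sub_pos.mpr hα
  have hpow : Tendsto (fun u : ℝ => u ^ (1 - α)) atTop (𝓝 0) := by
    simpa only [neg_sub] using tendsto_rpow_neg_atTop hpos
  have hlog : Tendsto (fun u : ℝ => u ^ (1 - α) * log u) atTop (𝓝 0) := by
    refine (isLittleO_log_rpow_atTop hpos).tendsto_div_nhds_zero.congr' ?_
    filter_upwards [eventually_gt_atTop 0] with u hu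
    rw [div_eq_mul_inv, mul_comm, ← Real.rpow_neg hu.le, neg_sub]
  have h := ((hlog.add (hpow.mul_const (α - 1)⁻¹)).neg).comp
    (tendsto_id.atTop_div_const hxmin)
  rw [zero_mul, add_zero, neg_zero] at h
  refine h.congr fun x => ?_
  simp only [Function.comp_apply, id, logMomentPrimitive]
  ring

lemma log_mul_powerLawDensity_eq_indicator (hxmin : 0 < xmin) (x : ℝ) :
    log (x / xmin) * powerLawDensity α xmin x =
      (Ioi xmin).indicator (fun x => log (x / xmin) * powerLawDensity α xmin x) x := by
  rcases lt_trichotomy x xmin with hx | rfl | hx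
  · simp [powerLawDensity, hx.not_ge, hx.not_gt]
  · simp [div_self hxmin.ne']
  · simp [hx]

lemma log_mul_powerLawDensity_nonneg (hα : 1 < α) (hxmin : 0 < xmin) {x : ℝ} (hx : xmin ≤ x) :
    0 ≤ log (x / xmin) * powerLawDensity α xmin x :=
  mul_nonneg (log_nonneg ((one_le_div hxmin).mpr hx)) (powerLawDensity_nonneg hα hxmin x)

lemma integrable_log_powerLawMeasure (hα : 1 < α) (hxmin : 0 < xmin) :
    Integrable (fun x => log (x / xmin)) (powerLawMeasure α xmin) := by
  rw [powerLawMeasure_eq_withDensity, integrable_withDensity_ofReal_iff measurable_powerLawDensity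
    (.of_forall (powerLawDensity_nonneg hα hxmin)),
    funext (log_mul_powerLawDensity_eq_indicator hxmin), integrable_indicator_iff measurableSet_Ioi]
  exact integrableOn_Ioi_deriv_of_nonneg'
    (fun x hx => hasDerivAt_logMomentPrimitive hα.ne' hxmin hx)
    (fun x hx => log_mul_powerLawDensity_nonneg hα hxmin hx.le)
    (tendsto_logMomentPrimitive_atTop hα hxmin)

lemma integral_log_powerLawMeasure (hα : 1 < α) (hxmin : 0 < xmin) :
    ∫ x, log (x / xmin) ∂powerLawMeasure α xmin = (α - 1)⁻¹ := by
  rw [powerLawMeasure_eq_withDensity, integral_withDensity_ofReal measurable_powerLawDensity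
    (.of_forall (powerLawDensity_nonneg hα hxmin)),
    funext (log_mul_powerLawDensity_eq_indicator hxmin), integral_indicator measurableSet_Ioi,
    integral_Ioi_of_hasDerivAt_of_nonneg'
      (fun x hx => hasDerivAt_logMomentPrimitive hα.ne' hxmin hx)
      (fun x hx => log_mul_powerLawDensity_nonneg hα hxmin hx.le)
      (tendsto_logMomentPrimitive_atTop hα hxmin)]
  simp [logMomentPrimitive, div_self hxmin.ne']

end PowerLaw

/-- The maximum likelihood estimator `α̂_n` converges to `α` almost surely. -/
theorem stmt5 {Ω : Type*} [MeasurableSpace Ω] (μ : Measure Ω) [IsProbabilityMeasure μ]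
    (α xmin : ℝ) (hα : 1 < α) (hxmin : 0 < xmin)
    (X : ℕ → Ω → ℝ) (hmeas : ∀ i, Measurable (X i))
    (hindep : iIndepFun X μ)
    (hdist : ∀ i, Measure.map (X i) μ = powerLawMeasure α xmin) :
    ∀ᵐ ω ∂μ, Tendsto (fun n : ℕ => mleExponent X xmin n ω) atTop (nhds α) := by
  have hlog : Measurable fun x : ℝ => log (x / xmin) := by fun_prop
  set Y : ℕ → Ω → ℝ := fun i ω => log (X i ω / xmin)
  have hident : ∀ i, IdentDistrib (Y i) (Y 0) μ μ := fun i =>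
    IdentDistrib.comp
      ⟨(hmeas i).aemeasurable, (hmeas 0).aemeasurable, by rw [hdist i, hdist 0]⟩ hlog
  have hint : Integrable (Y 0) μ :=
    (integrable_map_measure hlog.aestronglyMeasurable (hmeas 0).aemeasurable).mp
      (hdist 0 ▸ integrable_log_powerLawMeasure hα hxmin)
  have hmean : μ[Y 0] = (α - 1)⁻¹ := by
    rw [← integral_map (hmeas 0).aemeasurable hlog.aestronglyMeasurable, hdist 0,
      integral_log_powerLawMeasure hα hxmin]
  have hslln :=
    strong_law_ae_real Y hint (fun i j hij => (hindep.indepFun hij).comp hlog hlog) hident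
  filter_upwards [hslln] with ω hω
  rw [hmean] at hω
  have h := (hω.inv₀ (inv_ne_zero (sub_ne_zero.mpr hα.ne'))).const_add 1
  rw [inv_inv, add_sub_cancel] at h
  refine h.congr fun n => ?_
  rw [mleExponent, inv_div]
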